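/- Tailored value-function cut, validity (first part of Lemma 1 of the paper): let (y′,z*) be a bilevel feasible pair and let Φ_tail be the tailored value-function bound built from (y′,z*). Then every bilevel feasible pair (y,z) satisfies π^F(y,z) ≥ Φ_tail(y). -/

import Mathlib

/-!
Since `zs` is a schedule and `z` is an optimal reaction to `y`, `π^F(y,z) ≥ π^F(y,zs)`, so it
suffices to bound `Φ_tail(y)` by `π^F(y,zs)` separately for every customer `j`, period `t` and
location `i`. Over `ℓ`, the coefficient `v(y',zs)` is nonzero only at `ℓ₀`, the last capture
period of `j` before `t` under `(y',zs)`, and only when `i` is the follower facility patronized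
by `j` at `t`. If the bracket of the cut is positive, then `y` opens nothing `j` considers in
`(ℓ₀,t)` and nothing `j` prefers to `i` at `t`. Hence under `(y,zs)` customer `j` still
patronizes `i` at `t` and its previous capture period `ℓ₁` satisfies `ℓ₁ ≤ ℓ₀`, so it
accumulates at least the demand `D^{ℓ₀t}`. The indicator term absorbs the loss from splitting
when `y` opens `i` as well.
-/

open Finset

attribute [local instance] Classical.propDecidable

/-- Data of an instance of the competitive dynamic facility location problem under
cumulative customer demand (CDFLP-CCD).  `pref j a b` means that customer `j`
strictly prefers option `a` over option `b`, where `none` is the no-service option. -/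
structure CDFLP (I J : Type*) where
  /-- number of time periods; the period set is `{1, …, T}` -/
  T : ℕ
  /-- spawning demand of customer `j` at period `t` -/
  d : J → ℕ → ℝ
  /-- reward per unit of demand captured at location `i` -/
  r : I → ℝ
  /-- splitting factor -/
  ρ : ℝ
  /-- strict preference: `pref j a b` means `a ≻_j b` -/
  pref : J → Option I → Option I → Prop

namespace CDFLP

variable {I J : Type*} [Fintype I] [Fintype J]

/-- The model hypotheses: `T ≥ 1`, nonnegative demands and rewards, `ρ ∈ [0,1]`,
and every `≻_j` is a strict linear order on `I ∪ {0}`. -/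
def Valid (P : CDFLP I J) : Prop :=
  1 ≤ P.T ∧ (∀ j t, 0 ≤ P.d j t) ∧ (∀ i, 0 ≤ P.r i) ∧
    0 ≤ P.ρ ∧ P.ρ ≤ 1 ∧ ∀ j, IsStrictTotalOrder (Option I) (P.pref j)

/-- The locations considered by customer `j`, i.e. those preferred over no service. -/
noncomputable def considered (P : CDFLP I J) (j : J) : Finset I :=
  Finset.univ.filter fun i => P.pref j (some i) none

/-- `w` is a location schedule: on the planning horizon it is `{0,1}`-valued and opens
at most one facility per period. -/
def IsSched (P : CDFLP I J) (w : I → ℕ → ℝ) : Prop :=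
  ∀ t, 1 ≤ t → t ≤ P.T → (∀ i, w i t = 0 ∨ w i t = 1) ∧ (∑ i, w i t) ≤ 1

/-- `A_j^t(y,z)`: considered locations of `j` opened by the leader or the follower
at period `t`. -/
noncomputable def captureSet (P : CDFLP I J) (y z : I → ℕ → ℝ) (j : J) (t : ℕ) : Finset I :=
  Finset.univ.filter fun i => P.pref j (some i) none ∧ (y i t = 1 ∨ z i t = 1)

/-- `t ∈ 𝒯` is a capture period of customer `j`. -/
def IsCapture (P : CDFLP I J) (y z : I → ℕ → ℝ) (j : J) (t : ℕ) : Prop :=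
  1 ≤ t ∧ t ≤ P.T ∧ (P.captureSet y z j t).Nonempty

/-- `i` is the `≻_j`-greatest element of the capture set `A_j^t(y,z)`,
i.e. `i = i*(j,t)`. -/
def IsPatron (P : CDFLP I J) (y z : I → ℕ → ℝ) (j : J) (t : ℕ) (i : I) : Prop :=
  i ∈ P.captureSet y z j t ∧
    ∀ k ∈ P.captureSet y z j t, k ≠ i → P.pref j (some i) (some k)

/-- The greatest capture period of `j` smaller than `t` (`0` if there is none). -/
noncomputable def lastCap (P : CDFLP I J) (y z : I → ℕ → ℝ) (j : J) (t : ℕ) : ℕ :=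
  ((Finset.Ico 1 t).filter fun s => P.IsCapture y z j s).sup id

/-- `D_j^{ℓt}`: demand of customer `j` spawned in periods `ℓ+1, …, t`. -/
noncomputable def D (P : CDFLP I J) (j : J) (ℓ t : ℕ) : ℝ :=
  ∑ s ∈ Finset.Icc (ℓ + 1) t, P.d j s

/-- `v_{ij}^{ℓt}(y,z)`: fraction of `D_j^{ℓt}` captured by the follower through
location `i` at period `t`. -/
noncomputable def v (P : CDFLP I J) (y z : I → ℕ → ℝ) (j : J) (i : I) (ℓ t : ℕ) : ℝ :=
  if P.IsCapture y z j t ∧ ℓ = P.lastCap y z j t ∧ P.IsPatron y z j t i ∧ z i t = 1 then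
    1 - P.ρ * y i t
  else 0

/-- `u_{ij}^{ℓt}(y,z)`: fraction of `D_j^{ℓt}` captured by the leader through
location `i` at period `t`. -/
noncomputable def u (P : CDFLP I J) (y z : I → ℕ → ℝ) (j : J) (i : I) (ℓ t : ℕ) : ℝ :=
  if P.IsCapture y z j t ∧ ℓ = P.lastCap y z j t ∧ P.IsPatron y z j t i ∧ y i t = 1 then
    1 - (1 - P.ρ) * z i t
  else 0

/-- The follower's profit `π^F(y,z)`. -/
noncomputable def profitF (P : CDFLP I J) (y z : I → ℕ → ℝ) : ℝ :=
  ∑ t ∈ Finset.Icc 1 P.T, ∑ ℓ ∈ Finset.range t, ∑ j : J, ∑ i ∈ P.considered j,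
    P.r i * P.D j ℓ t * P.v y z j i ℓ t

/-- The leader's profit `π^L(y,z)`. -/
noncomputable def profitL (P : CDFLP I J) (y z : I → ℕ → ℝ) : ℝ :=
  ∑ t ∈ Finset.Icc 1 P.T, ∑ ℓ ∈ Finset.range t, ∑ j : J, ∑ i ∈ P.considered j,
    P.r i * P.D j ℓ t * P.u y z j i ℓ t

/-- `(y,z)` is bilevel feasible: both are schedules and `z` is an optimal
reaction of the follower against `y`. -/
def BilevelFeasible (P : CDFLP I J) (y z : I → ℕ → ℝ) : Prop :=
  P.IsSched y ∧ P.IsSched z ∧ ∀ z', P.IsSched z' → P.profitF y z' ≤ P.profitF y z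


/-- The tailored value-function bound built from the pair `(y', zs)`, evaluated at a
leader schedule `y`. -/
noncomputable def tailoredBound (P : CDFLP I J) (y' zs y : I → ℕ → ℝ) : ℝ :=
  ∑ t ∈ Finset.Icc 1 P.T, ∑ ℓ ∈ Finset.range t, ∑ j : J, ∑ i ∈ P.considered j,
    P.r i * P.D j ℓ t * P.v y' zs j i ℓ t *
      (1 - (∑ k ∈ P.considered j, ∑ s ∈ Finset.Ioo ℓ t, y k s)
         - (∑ k ∈ Finset.univ.filter fun k => P.pref j (some k) (some i), y k t)
         - (if P.v y' zs j i ℓ t = 1 ∧ 0 < P.ρ then 1 else 0) * y i t)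

end CDFLP

namespace CDFLP

section

variable {I J : Type*} {P : CDFLP I J}

lemma D_nonneg (hd : ∀ j t, 0 ≤ P.d j t) (j : J) (ℓ t : ℕ) : 0 ≤ P.D j ℓ t :=
  Finset.sum_nonneg fun s _ => hd j s

lemma D_antitone (hd : ∀ j t, 0 ≤ P.d j t) (j : J) (t : ℕ) : Antitone (P.D j · t) :=
  fun _ _ h => Finset.sum_le_sum_of_subset_of_nonneg
    (Finset.Icc_subset_Icc (by omega) le_rfl) fun s _ _ => hd j s

/-- With `a = y'(i,t)` and `b = y(i,t)`: the follower's share `1 - ρ a` of a capture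
against `y'`, damped by the indicator term of the cut, is at most its share against `y`. -/
lemma one_sub_mul_le_of_zero_or_one {ρ a b : ℝ} (hρ0 : 0 ≤ ρ)
    (ha : a = 0 ∨ a = 1) (hb : b = 0 ∨ b = 1)
    (h : (if 1 - ρ * a = 1 ∧ 0 < ρ then 1 else 0) * b < 1) :
    (1 - ρ * a) * (1 - (if 1 - ρ * a = 1 ∧ 0 < ρ then 1 else 0) * b) ≤ 1 - ρ * b := by
  rcases ha with rfl | rfl <;> rcases hb with rfl | rfl <;> split_ifs at h ⊢ with hc <;>
    grind

end

variable {I J : Type*} [Fintype I]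

noncomputable def tailFactor (P : CDFLP I J) (y' zs y : I → ℕ → ℝ) (j : J) (i : I)
    (ℓ t : ℕ) : ℝ :=
  1 - (∑ k ∈ P.considered j, ∑ s ∈ Finset.Ioo ℓ t, y k s)
    - (∑ k ∈ Finset.univ.filter fun k => P.pref j (some k) (some i), y k t)
    - (if P.v y' zs j i ℓ t = 1 ∧ 0 < P.ρ then 1 else 0) * y i t

section

variable {P : CDFLP I J} {y y' z zs w : I → ℕ → ℝ} {j : J} {i : I} {ℓ t : ℕ}

namespace IsSched

lemma nonneg (hw : P.IsSched w) (h1 : 1 ≤ t) (h2 : t ≤ P.T) (i : I) : 0 ≤ w i t := by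
  rcases (hw t h1 h2).1 i with h | h <;> simp [h]

lemma eq_zero_of_lt_one (hw : P.IsSched w) (h1 : 1 ≤ t) (h2 : t ≤ P.T)
    (h : w i t < 1) : w i t = 0 :=
  ((hw t h1 h2).1 i).resolve_right h.ne

end IsSched

lemma lastCap_lt (y z : I → ℕ → ℝ) (j : J) (ht : 1 ≤ t) : P.lastCap y z j t < t :=
  (Finset.sup_lt_iff (Nat.lt_of_lt_of_le Nat.zero_lt_one ht)).2 fun _ hs =>
    (Finset.mem_Ico.1 (Finset.mem_filter.1 hs).1).2

lemma le_lastCap {s : ℕ} (hs : 1 ≤ s) (hst : s < t) (hc : P.IsCapture y z j s) :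
    s ≤ P.lastCap y z j t :=
  Finset.le_sup (f := id) (Finset.mem_filter.2 ⟨Finset.mem_Ico.2 ⟨hs, hst⟩, hc⟩)

lemma lastCap_le {n : ℕ} (h : ∀ s, 1 ≤ s → s < t → P.IsCapture y z j s → s ≤ n) :
    P.lastCap y z j t ≤ n :=
  Finset.sup_le fun s hs => by
    obtain ⟨hs, hc⟩ := Finset.mem_filter.1 hs
    exact h s (Finset.mem_Ico.1 hs).1 (Finset.mem_Ico.1 hs).2 hc

lemma v_nonneg (hρ : P.ρ ≤ 1) (hy : P.IsSched y) (z : I → ℕ → ℝ) (j : J) (i : I)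
    (ℓ t : ℕ) : 0 ≤ P.v y z j i ℓ t := by
  unfold v
  split_ifs with h
  · rcases (hy t h.1.1 h.1.2.1).1 i with h | h <;> simp [h, hρ]
  · rfl

lemma v_lastCap (hc : P.IsCapture y z j t) (hi : P.IsPatron y z j t i) (hz : z i t = 1) :
    P.v y z j i (P.lastCap y z j t) t = 1 - P.ρ * y i t :=
  if_pos ⟨hc, rfl, hi, hz⟩

lemma v_eq_zero_of_ne_lastCap (h : ℓ ≠ P.lastCap y z j t) : P.v y z j i ℓ t = 0 :=
  if_neg fun hc => h hc.2.1

lemma isCapture_isPatron_of_v_ne_zero (h : P.v y z j i ℓ t ≠ 0) :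
    P.IsCapture y z j t ∧ P.IsPatron y z j t i ∧ z i t = 1 := by
  by_contra hc
  exact h (if_neg fun h' => hc ⟨h'.1, h'.2.2⟩)

lemma isCapture_of_leader_closed (h : ∀ k ∈ P.considered j, y k t = 0)
    (hc : P.IsCapture y z j t) (y' : I → ℕ → ℝ) : P.IsCapture y' z j t := by
  obtain ⟨h1, h2, k, hk⟩ := hc
  obtain ⟨-, hkc, hkyz⟩ := Finset.mem_filter.1 hk
  have hzk : z k t = 1 := hkyz.resolve_left fun hy => by
    simp [h k (Finset.mem_filter.2 ⟨Finset.mem_univ _, hkc⟩)] at hy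
  exact ⟨h1, h2, k, Finset.mem_filter.2 ⟨Finset.mem_univ _, hkc, Or.inr hzk⟩⟩

lemma lastCap_le_lastCap_of_leader_closed
    (h : ∀ k ∈ P.considered j, ∀ s ∈ Finset.Ioo (P.lastCap y' z j t) t, y k s = 0) :
    P.lastCap y z j t ≤ P.lastCap y' z j t :=
  lastCap_le fun s hs hst hc => by
    by_contra hlt
    have hclosed : ∀ k ∈ P.considered j, y k s = 0 := fun k hk =>
      h k hk s (Finset.mem_Ioo.2 ⟨by omega, hst⟩)
    have := le_lastCap hs hst (isCapture_of_leader_closed hclosed hc y')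
    omega

lemma IsPatron.of_leader_closed_above (hpref : IsStrictTotalOrder (Option I) (P.pref j))
    (hi : P.IsPatron y' z j t i) (hz : z i t = 1)
    (h : ∀ k, P.pref j (some k) (some i) → y k t = 0) : P.IsPatron y z j t i := by
  obtain ⟨hmem, hbest⟩ := hi
  have hic : P.pref j (some i) none := (Finset.mem_filter.1 hmem).2.1
  refine ⟨Finset.mem_filter.2 ⟨Finset.mem_univ _, hic, Or.inr hz⟩, fun k hk hne => ?_⟩
  obtain ⟨-, hkc, hkyz⟩ := Finset.mem_filter.1 hk
  rcases hkyz with hyk | hzk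
  · rcases trichotomous_of (P.pref j) (some i) (some k) with hik | hik | hki
    · exact hik
    · exact absurd (Option.some_injective _ hik).symm hne
    · simp [h k hki] at hyk
  · exact hbest k (Finset.mem_filter.2 ⟨Finset.mem_univ _, hkc, Or.inr hzk⟩) hne

lemma leader_closed_of_tailFactor_pos (hy : P.IsSched y) (ht1 : 1 ≤ t) (ht2 : t ≤ P.T)
    (hF : 0 < P.tailFactor y' zs y j i ℓ t) :
    (∀ k ∈ P.considered j, ∀ s ∈ Finset.Ioo ℓ t, y k s = 0) ∧
      (∀ k, P.pref j (some k) (some i) → y k t = 0) ∧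
      (if P.v y' zs j i ℓ t = 1 ∧ 0 < P.ρ then 1 else 0) * y i t < 1 := by
  have hIoo : ∀ s ∈ Finset.Ioo ℓ t, 1 ≤ s ∧ s ≤ P.T := fun s hs => by grind
  have hyIoo : ∀ k, ∀ s ∈ Finset.Ioo ℓ t, 0 ≤ y k s := fun k s hs =>
    hy.nonneg (hIoo s hs).1 (hIoo s hs).2 k
  have hA_nonneg := Finset.sum_nonneg fun k (_ : k ∈ P.considered j) =>
    Finset.sum_nonneg (hyIoo k)
  have hB_nonneg := Finset.sum_nonneg fun k
    (_ : k ∈ Finset.univ.filter fun k => P.pref j (some k) (some i)) => hy.nonneg ht1 ht2 k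
  have hC_nonneg : 0 ≤ (if P.v y' zs j i ℓ t = 1 ∧ 0 < P.ρ then 1 else 0) * y i t :=
    mul_nonneg (by split_ifs <;> norm_num) (hy.nonneg ht1 ht2 i)
  unfold tailFactor at hF
  refine ⟨fun k hk s hs => hy.eq_zero_of_lt_one (hIoo s hs).1 (hIoo s hs).2 ?_,
    fun k hk => hy.eq_zero_of_lt_one ht1 ht2 ?_, by linarith⟩
  · have := (Finset.single_le_sum (hyIoo k) hs).trans
      (Finset.single_le_sum (fun k _ => Finset.sum_nonneg (hyIoo k)) hk)
    linarith
  · have := Finset.single_le_sum (f := (y · t))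
      (s := Finset.univ.filter fun k => P.pref j (some k) (some i))
      (fun k _ => hy.nonneg ht1 ht2 k)
      (Finset.mem_filter.2 ⟨Finset.mem_univ k, hk⟩)
    linarith

lemma tail_term_le (hP : P.Valid) (hy' : P.IsSched y') (hy : P.IsSched y)
    (hc : P.IsCapture y' zs j t) (hi : P.IsPatron y' zs j t i) (hz : zs i t = 1) :
    P.r i * P.D j (P.lastCap y' zs j t) t * P.v y' zs j i (P.lastCap y' zs j t) t *
        P.tailFactor y' zs y j i (P.lastCap y' zs j t) t ≤
      P.r i * P.D j (P.lastCap y zs j t) t * P.v y zs j i (P.lastCap y zs j t) t := by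
  obtain ⟨-, hd, hr, hρ0, hρ1, hpref⟩ := hP
  obtain ⟨ht1, ht2, -⟩ := id hc
  set ℓ₀ := P.lastCap y' zs j t
  have hRHS :
      0 ≤ P.r i * P.D j (P.lastCap y zs j t) t * P.v y zs j i (P.lastCap y zs j t) t :=
    mul_nonneg (mul_nonneg (hr i) (D_nonneg hd j _ t)) (v_nonneg hρ1 hy zs j i _ t)
  rcases le_or_gt (P.tailFactor y' zs y j i ℓ₀ t) 0 with hF | hF
  · refine (mul_nonpos_of_nonneg_of_nonpos ?_ hF).trans hRHS
    exact mul_nonneg (mul_nonneg (hr i) (D_nonneg hd j _ t)) (v_nonneg hρ1 hy' zs j i _ t)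
  obtain ⟨hprior, hpreferred, hsplit⟩ := leader_closed_of_tailFactor_pos hy ht1 ht2 hF
  have hi' : P.IsPatron y zs j t i := hi.of_leader_closed_above (hpref j) hz hpreferred
  have hℓ : P.lastCap y zs j t ≤ ℓ₀ := lastCap_le_lastCap_of_leader_closed hprior
  have hF_eq : P.tailFactor y' zs y j i ℓ₀ t =
      1 - (if P.v y' zs j i ℓ₀ t = 1 ∧ 0 < P.ρ then 1 else 0) * y i t := by
    rw [tailFactor, Finset.sum_eq_zero fun k hk => Finset.sum_eq_zero (hprior k hk),
      Finset.sum_eq_zero fun k hk => hpreferred k (Finset.mem_filter.1 hk).2]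
    ring
  have hv := v_lastCap ⟨ht1, ht2, i, hi'.1⟩ hi' hz
  rw [v_lastCap hc hi hz] at hsplit hF_eq
  rw [hF_eq, v_lastCap hc hi hz, hv]
  calc P.r i * P.D j ℓ₀ t * (1 - P.ρ * y' i t) *
          (1 - (if 1 - P.ρ * y' i t = 1 ∧ 0 < P.ρ then 1 else 0) * y i t)
      = P.r i * P.D j ℓ₀ t * ((1 - P.ρ * y' i t) *
          (1 - (if 1 - P.ρ * y' i t = 1 ∧ 0 < P.ρ then 1 else 0) * y i t)) := by ring
    _ ≤ P.r i * P.D j ℓ₀ t * (1 - P.ρ * y i t) := by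
        gcongr
        · exact mul_nonneg (hr i) (D_nonneg hd j _ t)
        · exact one_sub_mul_le_of_zero_or_one hρ0 ((hy' t ht1 ht2).1 i)
            ((hy t ht1 ht2).1 i) hsplit
    _ ≤ P.r i * P.D j (P.lastCap y zs j t) t * (1 - P.ρ * y i t) := by
        gcongr
        exacts [hv ▸ v_nonneg hρ1 hy zs j i _ t, hr i, D_antitone hd j t hℓ]

lemma sum_tail_le (hP : P.Valid) (hy' : P.IsSched y') (hy : P.IsSched y) (ht : 1 ≤ t)
    (j : J) (i : I) :
    ∑ ℓ ∈ Finset.range t,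
        P.r i * P.D j ℓ t * P.v y' zs j i ℓ t * P.tailFactor y' zs y j i ℓ t ≤
      ∑ ℓ ∈ Finset.range t, P.r i * P.D j ℓ t * P.v y zs j i ℓ t := by
  have hterm_nonneg : ∀ ℓ ∈ Finset.range t, 0 ≤ P.r i * P.D j ℓ t * P.v y zs j i ℓ t :=
    fun ℓ _ => mul_nonneg (mul_nonneg (hP.2.2.1 i) (D_nonneg hP.2.1 j ℓ t))
      (v_nonneg hP.2.2.2.2.1 hy zs j i ℓ t)
  rw [Finset.sum_eq_single_of_mem _ (Finset.mem_range.2 (lastCap_lt y' zs j ht))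
    fun ℓ _ hℓ => by rw [v_eq_zero_of_ne_lastCap hℓ, mul_zero, zero_mul]]
  by_cases hv : P.v y' zs j i (P.lastCap y' zs j t) t = 0
  · rw [hv, mul_zero, zero_mul]
    exact Finset.sum_nonneg hterm_nonneg
  obtain ⟨hc, hi, hz⟩ := isCapture_isPatron_of_v_ne_zero hv
  exact (tail_term_le hP hy' hy hc hi hz).trans
    (Finset.single_le_sum hterm_nonneg (Finset.mem_range.2 (lastCap_lt y zs j ht)))

end

variable [Fintype J]

lemma tailoredBound_eq (P : CDFLP I J) (y' zs y : I → ℕ → ℝ) :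
    P.tailoredBound y' zs y = ∑ t ∈ Finset.Icc 1 P.T, ∑ ℓ ∈ Finset.range t, ∑ j : J,
      ∑ i ∈ P.considered j,
        P.r i * P.D j ℓ t * P.v y' zs j i ℓ t * P.tailFactor y' zs y j i ℓ t :=
  rfl

lemma tailoredBound_le_profitF {P : CDFLP I J} (hP : P.Valid) {y' zs y : I → ℕ → ℝ}
    (hy' : P.IsSched y') (hy : P.IsSched y) :
    P.tailoredBound y' zs y ≤ P.profitF y zs := by
  rw [tailoredBound_eq, profitF]
  refine Finset.sum_le_sum fun t ht => ?_
  simp only [Finset.sum_comm (s := Finset.range t)]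
  refine Finset.sum_le_sum fun j _ => Finset.sum_le_sum fun i _ => ?_
  exact sum_tail_le hP hy' hy (Finset.mem_Icc.1 ht).1 j i

/-- **Lemma 1, validity.**  The tailored value-function cut built from a bilevel
feasible pair `(y', zs)` holds for every bilevel feasible pair `(y, z)`. -/
theorem tailored_cut_valid (P : CDFLP I J) (hP : P.Valid)
    (y' zs : I → ℕ → ℝ) (hfeas : P.BilevelFeasible y' zs)
    (y z : I → ℕ → ℝ) (hyz : P.BilevelFeasible y z) :
    P.tailoredBound y' zs y ≤ P.profitF y z :=
  (tailoredBound_le_profitF hP hfeas.1 hyz.1).trans (hyz.2.2 zs hfeas.2.1)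

end CDFLP
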